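/- For every δ > 0 there exists a constant C > 0, independent of L and r, such that for all L ≥ r ≥ 1, all k, l ∈ ℕ₀ and all z ∈ [0, L − r]: ∑_{m ∈ ℕ₀} |b_{m,k}^z · b_{m,l}^z| ≤ C (1 + |k − l|)^{δ−1}. -/
import Mathlib


open MeasureTheory Real

/-- `ν_k = 1` for `k ≥ 1` and `ν₀ = 2^{−1/2}`. -/
noncomputable def nu (k : ℕ) : ℝ := if k = 0 then 1 / Real.sqrt 2 else 1

/-- The Neumann basis function `𝔫_{k,s}(x) = ν_k √(2/s) cos(π k x / s)` on `[0,s]`. -/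
noncomputable def nfun (s : ℝ) (k : ℕ) (x : ℝ) : ℝ :=
  nu k * Real.sqrt (2 / s) * Real.cos (π * (k : ℝ) * x / s)

/-- `b_{m,l}^z = ∫₀^r 𝔫_{m,L}(x + z) 𝔫_{l,r}(x) dx`. -/
noncomputable def bcoef (L r z : ℝ) (m l : ℕ) : ℝ :=
  ∫ x in Set.Icc (0 : ℝ) r, nfun L m (x + z) * nfun r l x


lemma summable_maj {δ : ℝ} (hδ : 0 < δ) :
    Summable (fun j : ℕ => (max 1 (j:ℝ)) ^ (-(1+δ))) := by
  rw [← summable_nat_add_iff 1]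
  have h1 : Summable (fun n : ℕ => (n:ℝ) ^ (-(1+δ))) :=
    Real.summable_nat_rpow.2 (by linarith)
  have h2 := (summable_nat_add_iff 1).2 h1
  convert h2 using 2 with j
  rw [max_eq_right]
  exact_mod_cast Nat.one_le_iff_ne_zero.2 (Nat.succ_ne_zero j)

lemma lemC {δ : ℝ} (hδ : 0 < δ) (c : ℝ) :
    Summable (fun q : ℕ => (max 1 |(q:ℝ)-c|) ^ (-(1+δ))) ∧
    (∑' q : ℕ, (max 1 |(q:ℝ)-c|) ^ (-(1+δ))) ≤
      2 * ∑' j : ℕ, (max 1 (j:ℝ)) ^ (-(1+δ)) := by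
  set maj : ℕ → ℝ := fun j => (max 1 (j:ℝ)) ^ (-(1+δ)) with hmaj
  have hmajs := summable_maj hδ
  have hmajnn : ∀ j, 0 ≤ maj j := fun j => Real.rpow_nonneg (le_trans zero_le_one (le_max_left _ _)) _
  set q₀ := ⌈c⌉₊ with hq₀
  have hcq : c ≤ (q₀ : ℝ) := Nat.le_ceil c
  have htail : ∀ i : ℕ, (max 1 |((i + q₀ : ℕ):ℝ)-c|) ^ (-(1+δ)) ≤ maj i := by
    intro i
    apply Real.rpow_le_rpow_of_nonpos (lt_of_lt_of_le zero_lt_one (le_max_left _ _))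
      _ (by linarith)
    apply max_le_max le_rfl
    rw [abs_of_nonneg (by push_cast; linarith [Nat.cast_nonneg (α := ℝ) i])]
    push_cast; linarith [Nat.cast_nonneg (α := ℝ) i]
  have hsumtail : Summable (fun i : ℕ => (max 1 |((i + q₀ : ℕ):ℝ)-c|) ^ (-(1+δ))) :=
    Summable.of_nonneg_of_le
      (fun i => Real.rpow_nonneg (le_trans zero_le_one (le_max_left _ _)) _) htail hmajs
  have hsum : Summable (fun q : ℕ => (max 1 |(q:ℝ)-c|) ^ (-(1+δ))) := by
    rw [← summable_nat_add_iff q₀]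
    exact_mod_cast hsumtail
  refine ⟨hsum, ?_⟩
  have hsplit := Summable.sum_add_tsum_nat_add q₀ hsum
  rw [← hsplit]
  have h1 : (∑' i : ℕ, (max 1 |((i + q₀ : ℕ):ℝ)-c|) ^ (-(1+δ))) ≤ ∑' j, maj j :=
    Summable.tsum_le_tsum htail hsumtail hmajs
  have h2 : (∑ q ∈ Finset.range q₀, (max 1 |(q:ℝ)-c|) ^ (-(1+δ))) ≤ ∑' j, maj j := by
    rcases Nat.eq_zero_or_pos q₀ with h | h
    · rw [h]
      simp only [Finset.range_zero, Finset.sum_empty]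
      exact tsum_nonneg hmajnn
    · have hc0 : (0:ℝ) < c := by
        by_contra hc
        push_neg at hc
        have : q₀ = 0 := Nat.ceil_eq_zero.2 hc
        omega
      have hclt : (q₀ : ℝ) < c + 1 := by
        exact_mod_cast Nat.ceil_lt_add_one hc0.le
      have hpt : ∀ q ∈ Finset.range q₀, (max 1 |(q:ℝ)-c|) ^ (-(1+δ)) ≤ maj (q₀ - 1 - q) := by
        intro q hq
        rw [Finset.mem_range] at hq
        apply Real.rpow_le_rpow_of_nonpos (lt_of_lt_of_le zero_lt_one (le_max_left _ _))
          _ (by linarith)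
        apply max_le_max le_rfl
        have hqc : (q:ℝ) < c := by
          have : (q:ℝ) ≤ (q₀:ℝ) - 1 := by
            have : (q:ℕ) ≤ q₀ - 1 := by omega
            have := (Nat.cast_le (α := ℝ)).2 this
            push_cast [Nat.cast_sub h] at this ⊢
            linarith
          linarith
        rw [abs_of_nonpos (by linarith), neg_sub]
        have : ((q₀ - 1 - q : ℕ):ℝ) = (q₀:ℝ) - 1 - q := by
          push_cast [Nat.cast_sub (by omega : q ≤ q₀ - 1), Nat.cast_sub h]
          ring
        rw [this]
        linarith
      calc ∑ q ∈ Finset.range q₀, (max 1 |(q:ℝ)-c|) ^ (-(1+δ))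
          ≤ ∑ q ∈ Finset.range q₀, maj (q₀ - 1 - q) := Finset.sum_le_sum hpt
        _ = ∑ i ∈ Finset.range q₀, maj i := by
            rw [Finset.sum_range_reflect (fun i => maj i) q₀]
        _ ≤ ∑' j, maj j := Summable.sum_le_tsum _ (fun i _ => hmajnn i) hmajs
  linarith

lemma lemH {δ : ℝ} (hδ : 0 < δ) {h : ℝ} (hh0 : 0 < h) (hh2 : h ≤ 2) (W : ℝ) :
    Summable (fun m : ℕ => (max 1 |(m:ℝ)*h - W|) ^ (-(1+δ))) ∧
    (∑' m : ℕ, (max 1 |(m:ℝ)*h - W|) ^ (-(1+δ))) ≤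
      (6 / h) * ∑' j : ℕ, (max 1 (j:ℝ)) ^ (-(1+δ)) := by
  set S := ∑' j : ℕ, (max 1 (j:ℝ)) ^ (-(1+δ)) with hS
  have hSnn : 0 ≤ S := tsum_nonneg fun j => Real.rpow_nonneg (le_trans zero_le_one (le_max_left _ _)) _
  set T : ℕ → ℝ := fun m => (max 1 |(m:ℝ)*h - W|) ^ (-(1+δ)) with hT
  have hTnn : ∀ m, 0 ≤ T m := fun m => Real.rpow_nonneg (le_trans zero_le_one (le_max_left _ _)) _
  set N := ⌈1/h⌉₊ with hN
  have hN1 : 1 ≤ N := Nat.one_le_iff_ne_zero.2 (by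
    simp only [hN, ne_eq, Nat.ceil_eq_zero, not_le]
    positivity)
  haveI : NeZero N := ⟨by omega⟩
  have hNr : (1:ℝ)/h ≤ (N:ℝ) := Nat.le_ceil _
  have hρ : 1 ≤ (N:ℝ) * h := by
    calc (1:ℝ) = (1/h) * h := by field_simp
    _ ≤ (N:ℝ) * h := by apply mul_le_mul_of_nonneg_right hNr hh0.le
  have hN3 : (N:ℝ) ≤ 3/h := by
    have h1 : (N:ℝ) < 1/h + 1 := Nat.ceil_lt_add_one (by positivity)
    have h2 : (1:ℝ) ≤ 2/h := by
      rw [le_div_iff₀ hh0]; linarith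
    have h3 : (1:ℝ)/h + 2/h = 3/h := by ring
    linarith
  -- pointwise bound on residue classes
  have key : ∀ (q : ℕ) (s : Fin N), T (q * N + s) ≤
      (max 1 |(q:ℝ) - (W - (s:ℕ)*h)/((N:ℝ)*h)|) ^ (-(1+δ)) := by
    intro q s
    apply Real.rpow_le_rpow_of_nonpos (lt_of_lt_of_le zero_lt_one (le_max_left _ _))
      _ (by linarith)
    apply max_le_max le_rfl
    have hNh : (0:ℝ) < (N:ℝ)*h := by positivity
    have : ((q * N + (s:ℕ) : ℕ):ℝ)*h - W = ((N:ℝ)*h) * ((q:ℝ) - (W - (s:ℕ)*h)/((N:ℝ)*h)) := by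
      field_simp
      push_cast
      ring
    rw [this, abs_mul, abs_of_pos hNh]
    nth_rewrite 1 [← one_mul |(q:ℝ) - (W - (s:ℕ)*h)/((N:ℝ)*h)|]
    exact mul_le_mul_of_nonneg_right hρ (abs_nonneg _)
  have hrowsum : ∀ s : Fin N, Summable (fun q : ℕ => T (q * N + s)) := by
    intro s
    exact Summable.of_nonneg_of_le (fun q => hTnn _) (key · s)
      ((lemC hδ ((W - (s:ℕ)*h)/((N:ℝ)*h))).1)
  have hrowbnd : ∀ s : Fin N, (∑' q : ℕ, T (q * N + s)) ≤ 2 * S := by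
    intro s
    exact le_trans (Summable.tsum_le_tsum (key · s) (hrowsum s) (lemC hδ _).1) (lemC hδ _).2
  -- assemble via divMod equivalence
  have hTs : (T ∘ (Nat.divModEquiv N).symm) = fun p : ℕ × Fin N => T (p.1 * N + p.2) := rfl
  have houter : Summable (fun q : ℕ => ∑ s : Fin N, T (q * N + s)) :=
    summable_sum (fun s _ => hrowsum s)
  have hprod : Summable (fun p : ℕ × Fin N => T (p.1 * N + p.2)) := by
    rw [summable_prod_of_nonneg (fun p => hTnn _)]
    refine ⟨fun q => Summable.of_finite, ?_⟩
    apply Summable.of_nonneg_of_le (fun q => tsum_nonneg fun s => hTnn _)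
      (fun q => le_of_eq (tsum_fintype _)) houter
  have hsum : Summable T := by
    rw [← (Nat.divModEquiv N).symm.summable_iff, hTs]
    exact hprod
  refine ⟨hsum, ?_⟩
  have e1 : (∑' m, T m) = ∑' p : ℕ × Fin N, T (p.1 * N + p.2) := by
    rw [← (Nat.divModEquiv N).symm.tsum_eq T]
    rfl
  rw [e1, Summable.tsum_prod' hprod (fun q => Summable.of_finite)]
  have e2 : ∀ q : ℕ, (∑' s : Fin N, T (q * N + s)) = ∑ s : Fin N, T (q * N + s) :=
    fun q => tsum_fintype _
  simp_rw [e2]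
  rw [Summable.tsum_finsetSum (fun s _ => hrowsum s)]
  calc (∑ s : Fin N, ∑' q : ℕ, T (q * N + s)) ≤ ∑ s : Fin N, 2 * S :=
        Finset.sum_le_sum (fun s _ => hrowbnd s)
    _ = (N:ℝ) * (2 * S) := by rw [Finset.sum_const, Finset.card_univ, Fintype.card_fin, nsmul_eq_mul]
    _ ≤ (3/h) * (2 * S) := by
        apply mul_le_mul_of_nonneg_right hN3 (by positivity)
    _ = (6/h) * S := by ring

lemma helper_pt {δ a b M : ℝ} (hδ : 0 < δ) (hδ1 : δ ≤ 1) (ha : 1 ≤ a) (hab : a ≤ b)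
    (hM : 0 < M) (hMb : M ≤ b) : a⁻¹ * b⁻¹ ≤ M ^ (δ-1) * a ^ (-(1+δ)) := by
  have ha0 : (0:ℝ) < a := lt_of_lt_of_le zero_lt_one ha
  have hb0 : (0:ℝ) < b := lt_of_lt_of_le ha0 hab
  have hbsplit : b⁻¹ = b ^ (-δ) * b ^ (δ-1) := by
    rw [← Real.rpow_add hb0, ← Real.rpow_neg_one b]
    norm_num
    ring_nf
  have h1 : b ^ (-δ) ≤ a ^ (-δ) := Real.rpow_le_rpow_of_nonpos ha0 hab (by linarith)
  have h2 : b ^ (δ-1) ≤ M ^ (δ-1) := Real.rpow_le_rpow_of_nonpos hM hMb (by linarith)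
  have hasplit : a⁻¹ * a ^ (-δ) = a ^ (-(1+δ)) := by
    rw [← Real.rpow_neg_one a, ← Real.rpow_add ha0]
    norm_num
    ring_nf
  calc a⁻¹ * b⁻¹ = a⁻¹ * (b ^ (-δ) * b ^ (δ-1)) := by rw [hbsplit]
    _ ≤ a⁻¹ * (a ^ (-δ) * M ^ (δ-1)) := by
        apply mul_le_mul_of_nonneg_left _ (by positivity)
        exact mul_le_mul h1 h2 (Real.rpow_nonneg hb0.le _) (Real.rpow_nonneg ha0.le _)
    _ = M ^ (δ-1) * a ^ (-(1+δ)) := by rw [← mul_assoc, hasplit]; ring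

lemma lemKEY {δ : ℝ} (hδ : 0 < δ) (hδ1 : δ ≤ 1) {h : ℝ} (hh0 : 0 < h) (hh2 : h ≤ 2)
    (U V : ℝ) :
    Summable (fun m : ℕ => (max 1 |(m:ℝ)*h - U|)⁻¹ * (max 1 |(m:ℝ)*h - V|)⁻¹) ∧
    (∑' m : ℕ, (max 1 |(m:ℝ)*h - U|)⁻¹ * (max 1 |(m:ℝ)*h - V|)⁻¹) ≤
      (max 1 (|U - V|/2)) ^ (δ-1) * ((12/h) * ∑' j : ℕ, (max 1 (j:ℝ)) ^ (-(1+δ))) := by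
  set S := ∑' j : ℕ, (max 1 (j:ℝ)) ^ (-(1+δ)) with hS
  set M := max 1 (|U - V|/2) with hM
  have hM1 : (1:ℝ) ≤ M := le_max_left _ _
  have hMpos : (0:ℝ) < M := lt_of_lt_of_le zero_lt_one hM1
  have hMe : (0:ℝ) ≤ M ^ (δ-1) := Real.rpow_nonneg hMpos.le _
  have hpt : ∀ m : ℕ, (max 1 |(m:ℝ)*h - U|)⁻¹ * (max 1 |(m:ℝ)*h - V|)⁻¹ ≤
      M ^ (δ-1) * ((max 1 |(m:ℝ)*h - U|) ^ (-(1+δ)) + (max 1 |(m:ℝ)*h - V|) ^ (-(1+δ))) := by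
    intro m
    set a := max 1 |(m:ℝ)*h - U| with hadef
    set b := max 1 |(m:ℝ)*h - V| with hbdef
    have ha : 1 ≤ a := le_max_left _ _
    have hb : 1 ≤ b := le_max_left _ _
    have htri : |U - V| ≤ |(m:ℝ)*h - U| + |(m:ℝ)*h - V| := by
      have := abs_sub_le U ((m:ℝ)*h) V
      rw [abs_sub_comm U ((m:ℝ)*h)] at this
      linarith
    have hMab : M ≤ max a b := by
      apply max_le (le_trans ha (le_max_left a b))
      have h1 : |U - V|/2 ≤ max |(m:ℝ)*h - U| |(m:ℝ)*h - V| := by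
        rcases le_total |(m:ℝ)*h - U| |(m:ℝ)*h - V| with hc | hc
        · rw [max_eq_right hc]; linarith
        · rw [max_eq_left hc]; linarith
      calc |U - V|/2 ≤ max |(m:ℝ)*h - U| |(m:ℝ)*h - V| := h1
        _ ≤ max a b := max_le_max (le_max_right _ _) (le_max_right _ _)
    rcases le_total a b with hab | hab
    · rw [max_eq_right hab] at hMab
      calc a⁻¹ * b⁻¹ ≤ M ^ (δ-1) * a ^ (-(1+δ)) := helper_pt hδ hδ1 ha hab hMpos hMab
        _ ≤ _ := by
            apply mul_le_mul_of_nonneg_left _ hMe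
            have : (0:ℝ) ≤ b ^ (-(1+δ)) := Real.rpow_nonneg (by linarith) _
            linarith
    · rw [max_eq_left hab] at hMab
      calc a⁻¹ * b⁻¹ = b⁻¹ * a⁻¹ := by ring
        _ ≤ M ^ (δ-1) * b ^ (-(1+δ)) := helper_pt hδ hδ1 hb hab hMpos hMab
        _ ≤ _ := by
            apply mul_le_mul_of_nonneg_left _ hMe
            have : (0:ℝ) ≤ a ^ (-(1+δ)) := Real.rpow_nonneg (by linarith) _
            linarith
  obtain ⟨hsU, hbU⟩ := lemH hδ hh0 hh2 U
  obtain ⟨hsV, hbV⟩ := lemH hδ hh0 hh2 V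
  have hmajsum : Summable (fun m : ℕ => M ^ (δ-1) *
      ((max 1 |(m:ℝ)*h - U|) ^ (-(1+δ)) + (max 1 |(m:ℝ)*h - V|) ^ (-(1+δ)))) :=
    ((hsU.add hsV).mul_left _)
  have hsum : Summable (fun m : ℕ => (max 1 |(m:ℝ)*h - U|)⁻¹ * (max 1 |(m:ℝ)*h - V|)⁻¹) := by
    apply Summable.of_nonneg_of_le (fun m => ?_) hpt hmajsum
    have h1 : (0:ℝ) < max 1 |(m:ℝ)*h - U| := lt_of_lt_of_le zero_lt_one (le_max_left _ _)
    have h2 : (0:ℝ) < max 1 |(m:ℝ)*h - V| := lt_of_lt_of_le zero_lt_one (le_max_left _ _)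
    positivity
  refine ⟨hsum, ?_⟩
  calc (∑' m : ℕ, (max 1 |(m:ℝ)*h - U|)⁻¹ * (max 1 |(m:ℝ)*h - V|)⁻¹)
      ≤ ∑' m : ℕ, M ^ (δ-1) *
        ((max 1 |(m:ℝ)*h - U|) ^ (-(1+δ)) + (max 1 |(m:ℝ)*h - V|) ^ (-(1+δ))) :=
        Summable.tsum_le_tsum hpt hsum hmajsum
    _ = M ^ (δ-1) * ((∑' m : ℕ, (max 1 |(m:ℝ)*h - U|) ^ (-(1+δ))) +
        ∑' m : ℕ, (max 1 |(m:ℝ)*h - V|) ^ (-(1+δ))) := by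
        rw [tsum_mul_left, Summable.tsum_add hsU hsV]
    _ ≤ M ^ (δ-1) * ((6/h) * S + (6/h) * S) := by
        apply mul_le_mul_of_nonneg_left _ hMe
        exact add_le_add hbU hbV
    _ = M ^ (δ-1) * ((12/h) * S) := by ring

noncomputable def Ffun (r t : ℝ) : ℝ := r / max 1 (r*|t|/2)

lemma Ffun_nonneg {r t : ℝ} (hr : 0 ≤ r) : 0 ≤ Ffun r t := by
  unfold Ffun
  positivity

lemma intbound (r t θ : ℝ) (hr : 0 ≤ r) :
    |∫ x in (0:ℝ)..r, Real.cos (t*x + θ)| ≤ Ffun r t := by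
  rcases le_or_gt (r*|t|/2) 1 with hc | hc
  · have hF : Ffun r t = r := by
      unfold Ffun
      rw [max_eq_left hc, div_one]
    rw [hF]
    have := intervalIntegral.norm_integral_le_of_norm_le_const
      (C := 1) (f := fun x => Real.cos (t*x + θ)) (a := (0:ℝ)) (b := r)
      (fun x _ => by rw [Real.norm_eq_abs]; exact Real.abs_cos_le_one _)
    rw [Real.norm_eq_abs] at this
    calc |∫ x in (0:ℝ)..r, Real.cos (t*x + θ)| ≤ 1 * |r - 0| := this
      _ = r := by rw [abs_of_nonneg (by linarith)]; ring
  · have ht : t ≠ 0 := by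
      intro h0
      rw [h0] at hc
      simp at hc
      linarith
    have hrpos : 0 < r := by
      rcases hr.lt_or_eq with h | h
      · exact h
      · exfalso; rw [← h] at hc; simp at hc; linarith
    have hF : Ffun r t = 2/|t| := by
      unfold Ffun
      rw [max_eq_right hc.le]
      have h1 : |t| ≠ 0 := by positivity
      field_simp
    rw [hF]
    rw [intervalIntegral.integral_comp_mul_add Real.cos ht θ]
    rw [integral_cos]
    rw [smul_eq_mul, abs_mul, abs_inv]
    have : |Real.sin (t*r + θ) - Real.sin (t*0 + θ)| ≤ 2 := by
      have h1 := Real.neg_one_le_sin (t*r + θ)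
      have h2 := Real.sin_le_one (t*r + θ)
      have h3 := Real.neg_one_le_sin (t*0 + θ)
      have h4 := Real.sin_le_one (t*0 + θ)
      rw [abs_le]; constructor <;> linarith
    calc |t|⁻¹ * |Real.sin (t*r + θ) - Real.sin (t*0 + θ)| ≤ |t|⁻¹ * 2 := by
          apply mul_le_mul_of_nonneg_left this (by positivity)
      _ = 2/|t| := by ring

lemma nu_nonneg (k : ℕ) : 0 ≤ nu k := by
  unfold nu; split <;> positivity

lemma nu_le_one (k : ℕ) : nu k ≤ 1 := by
  unfold nu; split
  · rw [div_le_one (by positivity)]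
    calc (1:ℝ) = Real.sqrt 1 := (Real.sqrt_one).symm
      _ ≤ Real.sqrt 2 := Real.sqrt_le_sqrt (by norm_num)
  · exact le_refl 1

lemma bcoef_bound {L r : ℝ} (hr : 1 ≤ r) (hrL : r ≤ L) (z : ℝ) (m k : ℕ) :
    |bcoef L r z m k| ≤ (Real.sqrt (L*r))⁻¹ *
      (Ffun r (π*m/L + π*k/r) + Ffun r (π*m/L - π*k/r)) := by
  have hL : (0:ℝ) < L := lt_of_lt_of_le (lt_of_lt_of_le zero_lt_one hr) hrL
  have hr0 : (0:ℝ) < r := lt_of_lt_of_le zero_lt_one hr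
  set a := π*(m:ℝ)/L with ha
  set b := π*(k:ℝ)/r with hb
  set Cst := nu m * nu k * (Real.sqrt (2/L) * Real.sqrt (2/r)) / 2 with hCst
  have hfeq : ∀ x : ℝ, nfun L m (x+z) * nfun r k x =
      Cst * (Real.cos ((a+b)*x + a*z) + Real.cos ((a-b)*x + a*z)) := by
    intro x
    have e1 : π * (m:ℝ) * (x+z) / L = a*x + a*z := by rw [ha]; ring
    have e2 : π * (k:ℝ) * x / r = b*x := by rw [hb]; ring
    have e3 : Real.cos (a*x+a*z) * Real.cos (b*x) =
        (Real.cos ((a+b)*x + a*z) + Real.cos ((a-b)*x + a*z))/2 := by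
      have p1 : (a+b)*x + a*z = (a*x+a*z) + b*x := by ring
      have p2 : (a-b)*x + a*z = (a*x+a*z) - b*x := by ring
      have e3gen : ∀ p q : ℝ, Real.cos p * Real.cos q =
          (Real.cos (p+q) + Real.cos (p-q))/2 := by
        intro p q
        rw [Real.cos_add, Real.cos_sub]
        ring
      rw [p1, p2, e3gen]
    show nu m * Real.sqrt (2/L) * Real.cos (π * (m:ℝ) * (x+z) / L) *
        (nu k * Real.sqrt (2/r) * Real.cos (π * (k:ℝ) * x / r)) = _
    rw [e1, e2, hCst]
    linear_combination (nu m * Real.sqrt (2/L) * (nu k * Real.sqrt (2/r))) * e3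
  have hint : bcoef L r z m k = Cst *
      ((∫ x in (0:ℝ)..r, Real.cos ((a+b)*x + a*z)) +
       ∫ x in (0:ℝ)..r, Real.cos ((a-b)*x + a*z)) := by
    unfold bcoef
    rw [MeasureTheory.integral_Icc_eq_integral_Ioc,
      ← intervalIntegral.integral_of_le (by linarith : (0:ℝ) ≤ r)]
    rw [show (∫ x in (0:ℝ)..r, nfun L m (x+z) * nfun r k x) =
        ∫ x in (0:ℝ)..r, Cst * (Real.cos ((a+b)*x + a*z) + Real.cos ((a-b)*x + a*z)) from
      intervalIntegral.integral_congr (fun x _ => hfeq x)]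
    rw [intervalIntegral.integral_const_mul]
    congr 1
    apply intervalIntegral.integral_add
    · exact (Real.continuous_cos.comp (by continuity)).intervalIntegrable _ _
    · exact (Real.continuous_cos.comp (by continuity)).intervalIntegrable _ _
  have hCnn : 0 ≤ Cst := by
    rw [hCst]
    have := nu_nonneg m; have := nu_nonneg k
    positivity
  have hs : 0 < Real.sqrt (L*r) := Real.sqrt_pos.2 (by positivity)
  have hCle : Cst ≤ (Real.sqrt (L*r))⁻¹ := by
    have e0 : (2/L)*(2/r) = 4/(L*r) := by field_simp; norm_num
    have e1 : Real.sqrt (2/L) * Real.sqrt (2/r) = Real.sqrt (4/(L*r)) := by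
      rw [← Real.sqrt_mul (by positivity), e0]
    have e2 : Real.sqrt (4/(L*r)) = 2 / Real.sqrt (L*r) := by
      rw [Real.sqrt_div (by norm_num : (0:ℝ) ≤ 4),
        show Real.sqrt 4 = 2 by
          rw [show (4:ℝ) = 2^2 by norm_num, Real.sqrt_sq (by norm_num : (0:ℝ) ≤ 2)]]
    have hnum : nu m * nu k ≤ 1 := by
      nlinarith [nu_le_one m, nu_le_one k, nu_nonneg m, nu_nonneg k]
    have hnumnn : 0 ≤ nu m * nu k := mul_nonneg (nu_nonneg m) (nu_nonneg k)
    rw [hCst, e1, e2]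
    calc nu m * nu k * (2 / Real.sqrt (L*r)) / 2
        = nu m * nu k * (Real.sqrt (L*r))⁻¹ := by field_simp
      _ ≤ 1 * (Real.sqrt (L*r))⁻¹ :=
          mul_le_mul_of_nonneg_right hnum (by positivity)
      _ = (Real.sqrt (L*r))⁻¹ := one_mul _
  rw [hint, abs_mul, abs_of_nonneg hCnn]
  have h1 := intbound r (a+b) (a*z) hr0.le
  have h2 := intbound r (a-b) (a*z) hr0.le
  have habs : |(∫ x in (0:ℝ)..r, Real.cos ((a+b)*x + a*z)) +
       ∫ x in (0:ℝ)..r, Real.cos ((a-b)*x + a*z)| ≤ Ffun r (a+b) + Ffun r (a-b) := by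
    calc _ ≤ |∫ x in (0:ℝ)..r, Real.cos ((a+b)*x + a*z)| +
          |∫ x in (0:ℝ)..r, Real.cos ((a-b)*x + a*z)| := abs_add_le _ _
      _ ≤ _ := add_le_add h1 h2
  calc Cst * |(∫ x in (0:ℝ)..r, Real.cos ((a+b)*x + a*z)) +
       ∫ x in (0:ℝ)..r, Real.cos ((a-b)*x + a*z)|
      ≤ (Real.sqrt (L*r))⁻¹ * (Ffun r (a+b) + Ffun r (a-b)) :=
        mul_le_mul hCle habs (abs_nonneg _) (by positivity)
    _ = _ := by rw [ha, hb]

lemma pairBound {δ L r : ℝ} (hδ : 0 < δ) (hδ1 : δ ≤ 1) (hr : 1 ≤ r) (hrL : r ≤ L)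
    (k l : ℕ) (σ τ : ℝ) (hσ : σ = π*(k:ℝ)/r ∨ σ = -(π*(k:ℝ)/r))
    (hτ : τ = π*(l:ℝ)/r ∨ τ = -(π*(l:ℝ)/r)) :
    Summable (fun m : ℕ => Ffun r (π*(m:ℝ)/L + σ) * Ffun r (π*(m:ℝ)/L + τ)) ∧
    (∑' m : ℕ, Ffun r (π*(m:ℝ)/L + σ) * Ffun r (π*(m:ℝ)/L + τ)) ≤
      32 * (∑' j : ℕ, (max 1 (j:ℝ)) ^ (-(1+δ))) * (L*r) * (1+|(k:ℝ)-(l:ℝ)|) ^ (δ-1) := by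
  have hL : (0:ℝ) < L := lt_of_lt_of_le (lt_of_lt_of_le zero_lt_one hr) hrL
  have hr0 : (0:ℝ) < r := lt_of_lt_of_le zero_lt_one hr
  set S := ∑' j : ℕ, (max 1 (j:ℝ)) ^ (-(1+δ)) with hSdef
  have hSnn : 0 ≤ S := tsum_nonneg fun j => Real.rpow_nonneg (le_trans zero_le_one (le_max_left _ _)) _
  set h := π*r/(2*L) with hh
  have hh0 : 0 < h := by rw [hh]; positivity
  have hh2 : h ≤ 2 := by
    rw [hh, div_le_iff₀ (by positivity)]
    nlinarith [Real.pi_le_four, Real.pi_pos]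
  set U := -(r*σ/2) with hU
  set V := -(r*τ/2) with hV
  have hFf : ∀ (σ' : ℝ) (m : ℕ), Ffun r (π*(m:ℝ)/L + σ') =
      r * (max 1 |(m:ℝ)*h - (-(r*σ'/2))|)⁻¹ := by
    intro σ' m
    unfold Ffun
    rw [div_eq_mul_inv]
    have harg : r*|π*(m:ℝ)/L + σ'|/2 = |(m:ℝ)*h - (-(r*σ'/2))| := by
      rw [show (m:ℝ)*h - (-(r*σ'/2)) = (r/2) * (π*(m:ℝ)/L + σ') from by
        rw [hh]; field_simp; ring]
      rw [abs_mul, abs_of_nonneg (by positivity : (0:ℝ) ≤ r/2)]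
      ring
    rw [harg]
  have hfuneq : (fun m : ℕ => Ffun r (π*(m:ℝ)/L + σ) * Ffun r (π*(m:ℝ)/L + τ)) =
      (fun m : ℕ => r^2 * ((max 1 |(m:ℝ)*h - U|)⁻¹ * (max 1 |(m:ℝ)*h - V|)⁻¹)) := by
    funext m
    rw [hFf σ m, hFf τ m, hU, hV]
    ring
  obtain ⟨hsum, hbnd⟩ := lemKEY hδ hδ1 hh0 hh2 U V
  constructor
  · rw [hfuneq]
    exact hsum.mul_left _
  set n := |(k:ℝ)-(l:ℝ)| with hn
  have hnn : 0 ≤ n := abs_nonneg _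
  -- |U - V| ≥ n
  have hUV : n ≤ |U - V| := by
    have habs2 : n ≤ (k:ℝ) + l := by
      rw [hn, abs_sub_le_iff]
      constructor <;> nlinarith [Nat.cast_nonneg (α := ℝ) k, Nat.cast_nonneg (α := ℝ) l]
    have hπ2 : (1:ℝ) ≤ π/2 := by nlinarith [Real.pi_gt_three]
    have key : ∀ c : ℝ, U - V = (π/2) * c → n ≤ |c| → n ≤ |U - V| := by
      intro c hc hnc
      rw [hc, abs_mul, abs_of_pos (by positivity : (0:ℝ) < π/2)]
      nlinarith [abs_nonneg c]
    rcases hσ with hσ | hσ <;> rcases hτ with hτ | hτ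
    · exact key ((l:ℝ) - k) (by rw [hU, hV, hσ, hτ]; field_simp; try ring)
        ((abs_sub_comm (k:ℝ) (l:ℝ)).le)
    · exact key (-(l:ℝ) - k) (by rw [hU, hV, hσ, hτ]; field_simp; try ring)
        (by rw [show -(l:ℝ) - k = -((k:ℝ)+l) from by ring, abs_neg];
            rw [abs_of_nonneg (by positivity)]; exact habs2)
    · exact key ((l:ℝ) + k) (by rw [hU, hV, hσ, hτ]; field_simp; try ring)
        (by rw [abs_of_nonneg (by positivity), add_comm]; exact habs2)
    · exact key ((k:ℝ) - l) (by rw [hU, hV, hσ, hτ]; field_simp; try ring)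
        (le_refl _)
  have hmax : (1+n)/4 ≤ max 1 (|U - V|/2) := by
    rcases le_total n 1 with hc | hc
    · have := le_max_left (1:ℝ) (|U - V|/2); linarith
    · have := le_max_right (1:ℝ) (|U - V|/2); linarith
  have hMbound : (max 1 (|U - V|/2)) ^ (δ-1) ≤ 4 * (1+n) ^ (δ-1) := by
    have h14 : (0:ℝ) < (1+n)/4 := by positivity
    have b1 : (max 1 (|U - V|/2)) ^ (δ-1) ≤ ((1+n)/4) ^ (δ-1) :=
      Real.rpow_le_rpow_of_nonpos h14 hmax (by linarith)
    have b2 : ((1+n)/4) ^ (δ-1) = (1+n) ^ (δ-1) * ((4:ℝ) ^ (δ-1))⁻¹ := by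
      rw [Real.div_rpow (by linarith) (by norm_num), div_eq_mul_inv]
    have b3 : ((4:ℝ) ^ (δ-1))⁻¹ = (4:ℝ) ^ (1-δ) := by
      rw [← Real.rpow_neg (by norm_num)]
      norm_num
    have b4 : (4:ℝ) ^ (1-δ) ≤ 4 := by
      calc (4:ℝ) ^ (1-δ) ≤ (4:ℝ) ^ (1:ℝ) :=
          Real.rpow_le_rpow_of_exponent_le (by norm_num) (by linarith)
        _ = 4 := Real.rpow_one 4
    have hbase : (0:ℝ) ≤ (1+n) ^ (δ-1) := Real.rpow_nonneg (by linarith) _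
    calc (max 1 (|U - V|/2)) ^ (δ-1) ≤ (1+n) ^ (δ-1) * ((4:ℝ) ^ (δ-1))⁻¹ := by
          rw [← b2]; exact b1
      _ ≤ (1+n) ^ (δ-1) * 4 := by
          rw [b3]; exact mul_le_mul_of_nonneg_left b4 hbase
      _ = 4 * (1+n) ^ (δ-1) := by ring
  have h12 : 12/h ≤ 8*L/r := by
    have he : 8*L/r*h = 4*π := by rw [hh]; field_simp; ring
    rw [div_le_iff₀ hh0, he]
    nlinarith [Real.pi_gt_three]
  rw [hfuneq, tsum_mul_left]
  have hMnn : (0:ℝ) ≤ (max 1 (|U - V|/2)) ^ (δ-1) :=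
    Real.rpow_nonneg (le_trans zero_le_one (le_max_left _ _)) _
  have hbase : (0:ℝ) ≤ (1+n) ^ (δ-1) := Real.rpow_nonneg (by linarith) _
  calc r^2 * (∑' m : ℕ, (max 1 |(m:ℝ)*h - U|)⁻¹ * (max 1 |(m:ℝ)*h - V|)⁻¹)
      ≤ r^2 * ((max 1 (|U - V|/2)) ^ (δ-1) * ((12/h) * S)) := by
        apply mul_le_mul_of_nonneg_left hbnd (by positivity)
    _ ≤ r^2 * ((4 * (1+n) ^ (δ-1)) * ((8*L/r) * S)) := by
        apply mul_le_mul_of_nonneg_left _ (by positivity)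
        apply mul_le_mul hMbound (mul_le_mul_of_nonneg_right h12 hSnn)
          (by positivity) (by positivity)
    _ = 32 * S * (L*r) * (1+n) ^ (δ-1) := by field_simp; ring

lemma S_ge_one {δ : ℝ} (hδ : 0 < δ) : 1 ≤ ∑' j : ℕ, (max 1 (j:ℝ)) ^ (-(1+δ)) := by
  have h0 : (max 1 ((0:ℕ):ℝ)) ^ (-(1+δ)) = 1 := by
    norm_num
  calc (1:ℝ) = (max 1 ((0:ℕ):ℝ)) ^ (-(1+δ)) := h0.symm
    _ ≤ ∑' j : ℕ, (max 1 (j:ℝ)) ^ (-(1+δ)) :=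
        Summable.le_tsum (summable_maj hδ) 0 (fun j _ =>
          Real.rpow_nonneg (le_trans zero_le_one (le_max_left _ _)) _)


/-- For every `δ > 0` there is `C > 0`, independent of `L` and `r`, such that for all
`L ≥ r ≥ 1`, `k, l ∈ ℕ₀` and `z ∈ [0, L − r]`:
`∑_{m ∈ ℕ₀} |b_{m,k}^z b_{m,l}^z| ≤ C (1 + |k − l|)^{δ−1}`. -/
theorem bcoef_sum_bound (δ : ℝ) (hδ : 0 < δ) :
    ∃ C : ℝ, 0 < C ∧ ∀ (L r z : ℝ) (k l : ℕ),
      1 ≤ r → r ≤ L → z ∈ Set.Icc 0 (L - r) →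
      (∑' m : ℕ, |bcoef L r z m k * bcoef L r z m l|) ≤
        C * (1 + |(k : ℝ) - (l : ℝ)|) ^ (δ - 1) := by
  set δ₀ := min δ 1 with hδ₀def
  have hδ₀ : 0 < δ₀ := lt_min hδ zero_lt_one
  have hδ₀1 : δ₀ ≤ 1 := min_le_right _ _
  have hδ₀δ : δ₀ ≤ δ := min_le_left _ _
  set S := ∑' j : ℕ, (max 1 (j:ℝ)) ^ (-(1+δ₀)) with hSdef
  have hS1 : (1:ℝ) ≤ S := S_ge_one hδ₀
  refine ⟨128 * S, by linarith, ?_⟩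
  intro L r z k l hr hrL hz
  have hL : (0:ℝ) < L := lt_of_lt_of_le (lt_of_lt_of_le zero_lt_one hr) hrL
  have hr0 : (0:ℝ) < r := lt_of_lt_of_le zero_lt_one hr
  set n := |(k:ℝ)-(l:ℝ)| with hn
  have hnn : (0:ℝ) ≤ n := abs_nonneg _
  obtain ⟨s11, b11⟩ := pairBound hδ₀ hδ₀1 hr hrL k l (π*(k:ℝ)/r) (π*(l:ℝ)/r)
    (Or.inl rfl) (Or.inl rfl)
  obtain ⟨s12, b12⟩ := pairBound hδ₀ hδ₀1 hr hrL k l (π*(k:ℝ)/r) (-(π*(l:ℝ)/r))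
    (Or.inl rfl) (Or.inr rfl)
  obtain ⟨s21, b21⟩ := pairBound hδ₀ hδ₀1 hr hrL k l (-(π*(k:ℝ)/r)) (π*(l:ℝ)/r)
    (Or.inr rfl) (Or.inl rfl)
  obtain ⟨s22, b22⟩ := pairBound hδ₀ hδ₀1 hr hrL k l (-(π*(k:ℝ)/r)) (-(π*(l:ℝ)/r))
    (Or.inr rfl) (Or.inr rfl)
  set P1 : ℕ → ℝ := fun m => Ffun r (π*(m:ℝ)/L + π*(k:ℝ)/r) with hP1
  set P2 : ℕ → ℝ := fun m => Ffun r (π*(m:ℝ)/L + -(π*(k:ℝ)/r)) with hP2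
  set Q1 : ℕ → ℝ := fun m => Ffun r (π*(m:ℝ)/L + π*(l:ℝ)/r) with hQ1
  set Q2 : ℕ → ℝ := fun m => Ffun r (π*(m:ℝ)/L + -(π*(l:ℝ)/r)) with hQ2
  set B := 32 * S * (L*r) * (1+n) ^ (δ₀-1) with hB
  have hPnn : ∀ m, 0 ≤ P1 m + P2 m := fun m =>
    add_nonneg (Ffun_nonneg hr0.le) (Ffun_nonneg hr0.le)
  have hQnn : ∀ m, 0 ≤ Q1 m + Q2 m := fun m =>
    add_nonneg (Ffun_nonneg hr0.le) (Ffun_nonneg hr0.le)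
  have hbk : ∀ m, |bcoef L r z m k| ≤ (Real.sqrt (L*r))⁻¹ * (P1 m + P2 m) := by
    intro m
    have := bcoef_bound hr hrL z m k
    have he : π*(m:ℝ)/L - π*(k:ℝ)/r = π*(m:ℝ)/L + -(π*(k:ℝ)/r) := by ring
    rw [he] at this
    exact this
  have hbl : ∀ m, |bcoef L r z m l| ≤ (Real.sqrt (L*r))⁻¹ * (Q1 m + Q2 m) := by
    intro m
    have := bcoef_bound hr hrL z m l
    have he : π*(m:ℝ)/L - π*(l:ℝ)/r = π*(m:ℝ)/L + -(π*(l:ℝ)/r) := by ring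
    rw [he] at this
    exact this
  have hsqrt : (Real.sqrt (L*r))⁻¹ * (Real.sqrt (L*r))⁻¹ = (L*r)⁻¹ := by
    rw [← mul_inv, Real.mul_self_sqrt (by positivity)]
  set maj : ℕ → ℝ := fun m => (L*r)⁻¹ *
      (P1 m * Q1 m + P1 m * Q2 m + P2 m * Q1 m + P2 m * Q2 m) with hmajdef
  have hpt : ∀ m, |bcoef L r z m k * bcoef L r z m l| ≤ maj m := by
    intro m
    rw [abs_mul]
    calc |bcoef L r z m k| * |bcoef L r z m l|
        ≤ ((Real.sqrt (L*r))⁻¹ * (P1 m + P2 m)) * ((Real.sqrt (L*r))⁻¹ * (Q1 m + Q2 m)) :=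
          mul_le_mul (hbk m) (hbl m) (abs_nonneg _) (mul_nonneg (by positivity) (hPnn m))
      _ = ((Real.sqrt (L*r))⁻¹ * (Real.sqrt (L*r))⁻¹) * ((P1 m + P2 m) * (Q1 m + Q2 m)) := by
          ring
      _ = maj m := by rw [hsqrt, hmajdef]; ring
  have hmajsum : Summable maj := by
    apply Summable.mul_left
    exact ((((s11.add s12)).add s21).add s22)
  have hbbsum : Summable (fun m : ℕ => |bcoef L r z m k * bcoef L r z m l|) :=
    Summable.of_nonneg_of_le (fun m => abs_nonneg _) hpt hmajsum
  have hBnn : 0 ≤ B := by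
    rw [hB]
    have : (0:ℝ) ≤ (1+n) ^ (δ₀-1) := Real.rpow_nonneg (by linarith) _
    positivity
  calc (∑' m : ℕ, |bcoef L r z m k * bcoef L r z m l|)
      ≤ ∑' m, maj m := Summable.tsum_le_tsum hpt hbbsum hmajsum
    _ = (L*r)⁻¹ * ((∑' m, P1 m * Q1 m) + (∑' m, P1 m * Q2 m) +
        (∑' m, P2 m * Q1 m) + (∑' m, P2 m * Q2 m)) := by
        rw [hmajdef, tsum_mul_left]
        rw [Summable.tsum_add ((s11.add s12).add s21) s22, Summable.tsum_add (s11.add s12) s21,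
          Summable.tsum_add s11 s12]
    _ ≤ (L*r)⁻¹ * (B + B + B + B) := by
        apply mul_le_mul_of_nonneg_left _ (by positivity)
        exact add_le_add (add_le_add (add_le_add b11 b12) b21) b22
    _ = 128 * S * (1+n) ^ (δ₀-1) := by
        rw [hB]
        field_simp
        ring
    _ ≤ 128 * S * (1+n) ^ (δ-1) := by
        apply mul_le_mul_of_nonneg_left _ (by linarith)
        exact Real.rpow_le_rpow_of_exponent_le (by linarith) (by linarith)
    _ = 128 * S * (1 + |(k:ℝ) - (l:ℝ)|) ^ (δ-1) := by rw [hn]
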